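/- Pair-Aggregate satisfies the inclusion bound in the case p_i + p_j ≥ 1: the expected value of the product of the new entries q_i · q_j is at most p_i · p_j. Equivalently, (1−p_j)(p_i+p_j−1)/(2−p_i−p_j) + (1−p_i)(p_i+p_j−1)/(2−p_i−p_j) ≤ p_i p_j. -/
import Mathlib

/-- Pair-Aggregate inclusion bound in the case `p i + p j ≥ 1`. -/
theorem pair_aggregate_inclusion_ge (pi pj : ℝ)
    (hpi : pi ∈ Set.Ioo (0:ℝ) 1) (hpj : pj ∈ Set.Ioo (0:ℝ) 1)
    (hsum : 1 ≤ pi + pj) :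
    (1 - pj) * (pi + pj - 1) / (2 - pi - pj) +
      (1 - pi) * (pi + pj - 1) / (2 - pi - pj) ≤ pi * pj := by
  obtain ⟨h1, h2⟩ := hpi
  obtain ⟨h3, h4⟩ := hpj
  have hd : (0:ℝ) < 2 - pi - pj := by linarith
  have key : (1 - pj) * (pi + pj - 1) / (2 - pi - pj) +
      (1 - pi) * (pi + pj - 1) / (2 - pi - pj) = pi + pj - 1 := by
    field_simp
    ring
  rw [key]
  nlinarith [mul_pos (sub_pos.mpr h2) (sub_pos.mpr h4)]
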